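/- arXiv:1401.2387 — 2 statements merged into one kernel-verified Lean document; each statement's English description precedes it below -/
import Mathlib

section
/- Let p₁, …, p₈ be eight distinct points of the empty conic C_E = {[x:y:z] ∈ ℙ²(ℂ) : x² + y² + z² = 0}. Then there do not exist homogeneous polynomials f₀, f₁, f₂ ∈ ℝ[s,t] of degree 3, not all zero, such that every pₖ lies in the image of the associated map [s:t] ↦ [f₀(s,t) : f₁(s,t) : f₂(s,t)]. -/
/-!
The parameters of the eight points are eight distinct points of `ℙ¹(ℂ)` at which the binary
sextic `f₀² + f₁² + f₂²` vanishes, because the points lie on `x² + y² + z² = 0`. A binary form of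
degree `n` with more than `n` zeros in `ℙ¹` is zero, so this real sextic vanishes identically;
being a sum of squares of real forms, it forces `f₀ = f₁ = f₂ = 0`.
-/

open MvPolynomial

open scoped LinearAlgebra.Projectivization

namespace MvPolynomial

lemma IsHomogeneous.eval_smul {σ R : Type*} [CommSemiring R] {φ : MvPolynomial σ R} {n : ℕ}
    (hφ : φ.IsHomogeneous n) (c : R) (x : σ → R) :
    eval (c • x) φ = c ^ n * eval x φ := by
  rw [eval_eq, eval_eq, Finset.mul_sum]
  refine Finset.sum_congr rfl fun d hd => ?_
  simp only [Pi.smul_apply, smul_eq_mul, mul_pow, Finset.prod_mul_distrib,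
    Finset.prod_pow_eq_pow_sum, ← hφ.degree_eq_sum_deg_support hd]
  ring

lemma IsHomogeneous.natDegree_aeval_X_one_le {R : Type*} [CommSemiring R]
    {φ : MvPolynomial (Fin 2) R} {n : ℕ} (hφ : φ.IsHomogeneous n) :
    (MvPolynomial.aeval ![Polynomial.X, (1 : Polynomial R)] φ).natDegree ≤ n := by
  conv_lhs => rw [φ.as_sum, map_sum]
  refine Polynomial.natDegree_sum_le_of_forall_le _ _ fun d hd => ?_
  rw [aeval_monomial, Finsupp.prod_fintype _ _ (by simp), Fin.prod_univ_two]
  refine (Polynomial.natDegree_C_mul_le _ _).trans ?_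
  have hd : d 0 + d 1 = n := by
    simpa [Finsupp.weight_apply, Finsupp.sum_fintype, Fin.sum_univ_two] using
      hφ (mem_support_iff.mp hd)
  simpa using (Polynomial.natDegree_X_pow_le (R := R) (d 0)).trans (hd ▸ Nat.le_add_right _ _)

section Field

variable {σ K : Type*} [Field K] {n : ℕ}

lemma IsHomogeneous.eval_rep_mk_eq_zero_iff {φ : MvPolynomial σ K} (hφ : φ.IsHomogeneous n)
    {v : σ → K} (hv : v ≠ 0) :
    eval (Projectivization.mk K v hv).rep φ = 0 ↔ eval v φ = 0 := by
  obtain ⟨c, hc⟩ := Projectivization.exists_smul_eq_mk_rep K v hv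
  rw [← hc, Units.smul_def, hφ.eval_smul, mul_eq_zero_iff_left (pow_ne_zero _ c.ne_zero)]

lemma mk_eval_eq_of_mk_eq {ι : Type*} {F : ι → MvPolynomial σ K}
    (hF : ∀ i, (F i).IsHomogeneous n) {x y : σ → K} {hx : x ≠ 0} {hy : y ≠ 0}
    (hxy : Projectivization.mk K x hx = Projectivization.mk K y hy)
    (hFx : (fun i => eval x (F i)) ≠ 0) (hFy : (fun i => eval y (F i)) ≠ 0) :
    Projectivization.mk K _ hFx = Projectivization.mk K _ hFy := by
  obtain ⟨c, rfl⟩ := (Projectivization.mk_eq_mk_iff K x y hx hy).mp hxy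
  refine (Projectivization.mk_eq_mk_iff K _ _ hFx hFy).mpr ⟨c ^ n, _root_.funext fun i => ?_⟩
  simp [Units.smul_def, (hF i).eval_smul]

end Field

lemma eq_zero_of_sum_sq_eq_zero {σ ι R : Type*} [Field R] [LinearOrder R] [IsStrictOrderedRing R]
    {s : Finset ι} {f : ι → MvPolynomial σ R} (h : ∑ i ∈ s, f i ^ 2 = 0) :
    ∀ i ∈ s, f i = 0 := by
  intro i hi
  refine MvPolynomial.funext fun x => ?_
  have hx : ∑ j ∈ s, eval x (f j) ^ 2 = 0 := by simpa using congrArg (eval x) h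
  simpa using (Finset.sum_eq_zero_iff_of_nonneg fun j _ => sq_nonneg _).mp hx i hi

end MvPolynomial

namespace Projectivization

variable {K : Type*} [Field K]

lemma eq_mk_div_one_of_rep_one_ne_zero (q : ℙ K (Fin 2 → K)) (h : q.rep 1 ≠ 0) :
    q = mk K ![q.rep 0 / q.rep 1, 1] (by simp) := by
  conv_lhs => rw [← q.mk_rep]
  refine (mk_eq_mk_iff' K _ _ q.rep_nonzero _).mpr ⟨q.rep 1, ?_⟩
  ext i
  fin_cases i <;> simp [mul_div_cancel₀ _ h]

lemma eq_mk_one_zero_of_rep_one_eq_zero (q : ℙ K (Fin 2 → K)) (h : q.rep 1 = 0) :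
    q = mk K ![1, 0] (by simp) := by
  conv_lhs => rw [← q.mk_rep]
  refine (mk_eq_mk_iff' K _ _ q.rep_nonzero _).mpr ⟨q.rep 0, ?_⟩
  ext i
  fin_cases i <;> simp [h]

end Projectivization

open Projectivization

namespace Polynomial

lemma eval_one_zero_homogenize {R : Type*} [CommSemiring R] (p : R[X]) (n : ℕ) :
    MvPolynomial.eval ![1, 0] (p.homogenize n) = p.coeff n := by
  rw [homogenize, map_sum, Finset.sum_eq_single (n, 0)]
  · simp [MvPolynomial.eval_monomial]
  · rintro ⟨k, l⟩ hkl hne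
    have hl : l ≠ 0 := by
      rintro rfl
      simp_all
    simp [MvPolynomial.eval_monomial, hl]
  · simp

lemma eq_zero_of_lt_card_of_eval_rep_homogenize_eq_zero {K : Type*} [Field K]
    {p : K[X]} {n : ℕ} (hp : p.natDegree ≤ n) {ι : Type*} [Fintype ι]
    {q : ι → ℙ K (Fin 2 → K)} (hq : Function.Injective q)
    (heval : ∀ i, MvPolynomial.eval (q i).rep (p.homogenize n) = 0)
    (hcard : n < Fintype.card ι) : p = 0 := by
  classical
  by_contra hp0
  let root (i : {i // (q i).rep 1 ≠ 0}) : K := (q i).rep 0 / (q i).rep 1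
  have hroot (i) : p.eval (root i) = 0 := by
    have := heval i
    rw [eval_homogenize hp _ i.2] at this
    exact (mul_eq_zero.mp this).resolve_right (pow_ne_zero _ i.2)
  have hroot_inj : Function.Injective root := fun i j hij => Subtype.ext <| hq <| by
    rw [eq_mk_div_one_of_rep_one_ne_zero _ i.2, eq_mk_div_one_of_rep_one_ne_zero _ j.2]
    simp only [root] at hij
    simp only [hij]
  -- A zero at the point `[1 : 0]` at infinity lowers the degree of `p` below `n`.
  have hdeg : p.natDegree + Fintype.card {i // ¬(q i).rep 1 ≠ 0} ≤ n := by
    rcases isEmpty_or_nonempty {i // ¬(q i).rep 1 ≠ 0} with h | ⟨i, hi⟩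
    · rw [Fintype.card_eq_zero, add_zero]
      exact hp
    have hi_eq : q i = mk K ![1, 0] (by simp) :=
      eq_mk_one_zero_of_rep_one_eq_zero _ (not_not.mp hi)
    have hcoeff : p.coeff n = 0 := by
      have := heval i
      rwa [hi_eq, (isHomogeneous_homogenize p).eval_rep_mk_eq_zero_iff,
        eval_one_zero_homogenize] at this
    have hlt : p.natDegree < n := lt_of_le_of_ne hp fun h => hp0 <| by
      rwa [← h, coeff_natDegree, leadingCoeff_eq_zero] at hcoeff
    have hsub : Subsingleton {i // ¬(q i).rep 1 ≠ 0} := ⟨fun j k => Subtype.ext <| hq <| by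
      rw [eq_mk_one_zero_of_rep_one_eq_zero _ (not_not.mp j.2),
        eq_mk_one_zero_of_rep_one_eq_zero _ (not_not.mp k.2)]⟩
    have := Fintype.card_le_one_iff_subsingleton.mpr hsub
    omega
  have hsplit := Fintype.card_subtype_compl (fun i => (q i).rep 1 ≠ 0)
  exact hp0 (eq_zero_of_natDegree_lt_card_of_eval_eq_zero p hroot_inj hroot (by omega))

end Polynomial

lemma MvPolynomial.IsHomogeneous.eq_zero_of_lt_card_of_eval_rep_eq_zero {K : Type*} [Field K]
    {φ : MvPolynomial (Fin 2) K} {n : ℕ} (hφ : φ.IsHomogeneous n) {ι : Type*} [Fintype ι]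
    {q : ι → ℙ K (Fin 2 → K)} (hq : Function.Injective q) (heval : ∀ i, eval (q i).rep φ = 0)
    (hcard : n < Fintype.card ι) : φ = 0 := by
  rw [← Polynomial.homogenize_eq_of_isHomogeneous hφ rfl] at heval ⊢
  rw [Polynomial.eq_zero_of_lt_card_of_eval_rep_homogenize_eq_zero hφ.natDegree_aeval_X_one_le
    hq heval hcard, Polynomial.homogenize_zero]

/-- No rational cubic curve in `ℙ²` parametrized by real binary cubic forms
passes through eight distinct points of the empty conic `{x² + y² + z² = 0}`. -/
theorem no_real_cubic_through_eight_points_of_empty_conic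
    (p : Fin 8 → Projectivization ℂ (Fin 3 → ℂ))
    (hpdist : Function.Injective p)
    (hpC : ∀ k, ∑ i, ((p k).rep i) ^ 2 = 0) :
    ¬ ∃ f : Fin 3 → MvPolynomial (Fin 2) ℝ,
      (∀ i, (f i).IsHomogeneous 3) ∧ (∃ i, f i ≠ 0) ∧
      ∀ k, ∃ (a b : ℂ) (h : (fun i => eval ![a, b] (map (algebraMap ℝ ℂ) (f i))) ≠ 0),
        p k = Projectivization.mk ℂ _ h := by
  rintro ⟨f, hf, ⟨i₀, hi₀⟩, hp⟩
  choose a b hab hpk using hp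
  set F : Fin 3 → MvPolynomial (Fin 2) ℂ := fun i => map (algebraMap ℝ ℂ) (f i)
  have hF (i) : (F i).IsHomogeneous 3 := (hf i).map _
  have hab0 (k) : ![a k, b k] ≠ 0 := fun h => hab k <| _root_.funext fun i => by
    show eval ![a k, b k] (F i) = 0
    rw [h, ← zero_smul ℂ (0 : Fin 2 → ℂ), (hF i).eval_smul, zero_pow three_ne_zero, zero_mul]
  let t (k : Fin 8) : ℙ ℂ (Fin 2 → ℂ) := mk ℂ ![a k, b k] (hab0 k)
  have ht : Function.Injective t := fun j k h => hpdist <| by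
    rw [hpk j, hpk k]
    exact mk_eval_eq_of_mk_eq hF h _ _
  have hG : (∑ i, F i ^ 2).IsHomogeneous 6 :=
    IsHomogeneous.sum _ _ _ fun i _ => (hF i).pow 2
  have hconic : (∑ i, X i ^ 2 : MvPolynomial (Fin 3) ℂ).IsHomogeneous 2 :=
    IsHomogeneous.sum _ _ _ fun i _ => (isHomogeneous_X ℂ i).pow 2
  have hGt (k) : eval (t k).rep (∑ i, F i ^ 2) = 0 := by
    have hpk_conic : eval (p k).rep (∑ i, X i ^ 2) = 0 := by simpa using hpC k
    rw [hpk k, hconic.eval_rep_mk_eq_zero_iff] at hpk_conic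
    rw [hG.eval_rep_mk_eq_zero_iff]
    simpa [F] using hpk_conic
  have hG0 := hG.eq_zero_of_lt_card_of_eval_rep_eq_zero ht hGt (by simp)
  have hsum : ∑ i, f i ^ 2 = 0 :=
    map_injective _ (algebraMap ℝ ℂ).injective (by simpa [F] using hG0)
  exact hi₀ (eq_zero_of_sum_sq_eq_zero hsum i₀ (Finset.mem_univ _))
end

section
/- Let p₁, …, p₁₀ be ten distinct points of the empty conic C_E = {[x:y:z] ∈ ℙ²(ℂ) : x² + y² + z² = 0}. Then there do not exist homogeneous polynomials f₀, f₁, f₂ ∈ ℝ[s,t] of degree 4, not all zero, such that every pₖ lies in the image of the associated map [s:t] ↦ [f₀(s,t) : f₁(s,t) : f₂(s,t)]. -/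
/-!
If the points were `[f(aₖ, bₖ)]`, every `[aₖ : bₖ] ∈ ℙ¹` would be a zero of the binary form
`f₀² + f₁² + f₂²` of degree 8, which is nonzero because the `fᵢ` are real. These ten points of
`ℙ¹` are distinct since their images are. But a nonzero binary form of degree `n` has at most `n`
zeros in `ℙ¹`: dehomogenizing at `y = 1` gives a polynomial of degree at most `n` whose roots
account for the zeros off `[1 : 0]`, and a zero at `[1 : 0]` lowers that degree.
-/

open MvPolynomial

namespace MvPolynomial.IsHomogeneous

variable {σ R : Type*} [CommSemiring R] {φ : MvPolynomial σ R} {n : ℕ}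

theorem eval_smul_s14 (hφ : φ.IsHomogeneous n) (c : R) (v : σ → R) :
    eval (c • v) φ = c ^ n * eval v φ := by
  rw [eval_eq, eval_eq, Finset.mul_sum]
  refine Finset.sum_congr rfl fun d hd => ?_
  simp only [Pi.smul_apply, smul_eq_mul, mul_pow, Finset.prod_mul_distrib,
    Finset.prod_pow_eq_pow_sum, ← hφ.degree_eq_sum_deg_support hd]
  ring

theorem eval_zero (hφ : φ.IsHomogeneous n) (hn : n ≠ 0) : eval 0 φ = 0 := by
  simpa [zero_pow hn] using hφ.eval_smul_s14 0 0

end MvPolynomial.IsHomogeneous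

theorem MvPolynomial.sum_sq_ne_zero {σ ι R : Type*} [Fintype ι] [Field R] [LinearOrder R]
    [IsStrictOrderedRing R] {f : ι → MvPolynomial σ R} {i : ι} (hi : f i ≠ 0) :
    ∑ j, f j ^ 2 ≠ 0 := by
  obtain ⟨x, hx⟩ : ∃ x, eval x (f i) ≠ 0 := by
    by_contra! h
    exact hi (MvPolynomial.funext fun x => by simpa using h x)
  intro hsum
  have hsq := congrArg (eval x) hsum
  simp only [map_sum, map_pow, map_zero] at hsq
  rw [Finset.sum_eq_zero_iff_of_nonneg fun j _ => sq_nonneg _] at hsq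
  exact hx (pow_eq_zero_iff two_ne_zero |>.1 (hsq i (Finset.mem_univ i)))

theorem MvPolynomial.aeval_X_one_eq_map_finSuccEquiv {K : Type*} [Field K]
    (G : MvPolynomial (Fin 2) K) :
    aeval ![Polynomial.X, 1] G = (finSuccEquiv K 1 G).map (eval ![1]) := by
  induction G using MvPolynomial.induction_on with
  | C c => simp [finSuccEquiv_apply]
  | add p q hp hq => simp [hp, hq]
  | mul_X p i hp =>
    fin_cases i
    · simp [hp, finSuccEquiv_X_zero]
    · have := finSuccEquiv_X_succ (R := K) (j := (0 : Fin 1))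
      simp_all

theorem MvPolynomial.IsHomogeneous.natDegree_aeval_X_one_le_s14 {K : Type*} [Field K]
    {G : MvPolynomial (Fin 2) K} {n : ℕ} (hG : G.IsHomogeneous n) :
    (MvPolynomial.aeval ![(Polynomial.X : Polynomial K), 1] G).natDegree ≤ n := by
  rw [aeval_X_one_eq_map_finSuccEquiv]
  calc _ ≤ (finSuccEquiv K 1 G).natDegree := Polynomial.natDegree_map_le
    _ = G.degreeOf 0 := natDegree_finSuccEquiv G
    _ ≤ G.totalDegree := degreeOf_le_totalDegree G 0
    _ ≤ n := hG.totalDegree_le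

theorem Polynomial.eval_homogenize_of_eq_zero {R : Type*} [CommSemiring R] (p : Polynomial R)
    (n : ℕ) {x : Fin 2 → R} (hx : x 1 = 0) :
    MvPolynomial.eval x (p.homogenize n) = p.coeff n * x 0 ^ n := by
  rw [homogenize, MvPolynomial.eval_sum, Finset.sum_eq_single (n, 0)]
  · simp [MvPolynomial.eval_monomial]
  · rintro ⟨k, l⟩ hkl hne
    have hl : l ≠ 0 := by
      rintro rfl
      simp_all
    simp [MvPolynomial.eval_monomial, hx, hl]
  · simp

namespace Projectivization

variable {K : Type*} [Field K]

theorem mk_eq_mk_of_mul_eq_mul {v w : Fin 2 → K} (hv : v ≠ 0) (hw : w ≠ 0)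
    (h : v 0 * w 1 = v 1 * w 0) : mk K v hv = mk K w hw := by
  rw [mk_eq_mk_iff']
  by_cases hw0 : w 0 = 0
  · have hw1 : w 1 ≠ 0 := fun hw1 => hw (funext (Fin.forall_fin_two.2 ⟨hw0, hw1⟩))
    have hv0 : v 0 = 0 := by simpa [hw0, hw1] using h
    refine ⟨v 1 / w 1, funext (Fin.forall_fin_two.2 ⟨?_, ?_⟩)⟩ <;>
      simp only [Pi.smul_apply, smul_eq_mul]
    · simp [hv0, hw0]
    · field_simp
  · refine ⟨v 0 / w 0, funext (Fin.forall_fin_two.2 ⟨?_, ?_⟩)⟩ <;>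
      simp only [Pi.smul_apply, smul_eq_mul] <;> field_simp
    linear_combination h

theorem mk_eval_eq_mk_eval {σ ι : Type*} {F : ι → MvPolynomial σ K} {n : ℕ}
    (hF : ∀ i, (F i).IsHomogeneous n) {v w : σ → K} {hv : v ≠ 0} {hw : w ≠ 0}
    (h : mk K v hv = mk K w hw) (hFv : (fun i => eval v (F i)) ≠ 0)
    (hFw : (fun i => eval w (F i)) ≠ 0) :
    mk K (fun i => eval v (F i)) hFv = mk K (fun i => eval w (F i)) hFw := by
  obtain ⟨c, rfl⟩ := (mk_eq_mk_iff' K _ _ hv hw).1 h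
  exact (mk_eq_mk_iff' K _ _ _ _).2 ⟨c ^ n, funext fun i => ((hF i).eval_smul_s14 c w).symm⟩

theorem sum_sq_eq_zero_of_eq_mk {ι : Type*} [Fintype ι] {x : Projectivization K (ι → K)}
    {v : ι → K} (hv : v ≠ 0) (hx : x = mk K v hv) (h : ∑ i, x.rep i ^ 2 = 0) :
    ∑ i, v i ^ 2 = 0 := by
  obtain ⟨c, hc⟩ := (mk_eq_mk_iff' K _ _ x.rep_nonzero hv).1 (by rw [mk_rep, hx])
  have hc0 : c ≠ 0 := by
    rintro rfl
    exact x.rep_nonzero (by simp [← hc])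
  have : c ^ 2 * ∑ i, v i ^ 2 = 0 := by
    rw [Finset.mul_sum, ← h, ← hc]
    simp [mul_pow]
  exact (mul_eq_zero.1 this).resolve_left (pow_ne_zero 2 hc0)

end Projectivization

theorem Polynomial.card_le_natDegree_of_eval_homogenize_eq_zero {K ι : Type*} [Field K]
    {p : Polynomial K} {n : ℕ} (hp0 : p ≠ 0) (hpn : p.natDegree ≤ n) {s : Finset ι}
    {v : ι → Fin 2 → K} (hv : ∀ i, v i ≠ 0)
    (hinj : Set.InjOn (fun i => Projectivization.mk K (v i) (hv i)) s)
    (hs : ∀ i ∈ s, v i 1 ≠ 0)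
    (hzero : ∀ i ∈ s, MvPolynomial.eval (v i) (p.homogenize n) = 0) :
    s.card ≤ p.natDegree := by
  classical
  rw [← Finset.card_image_of_injOn (f := fun i => v i 0 / v i 1)]
  · refine card_le_degree_of_subset_roots fun x hx => ?_
    obtain ⟨i, hi, rfl⟩ := Finset.mem_image.1 hx
    have hroot := hzero i hi
    rw [eval_homogenize hpn _ (hs i hi)] at hroot
    exact (mem_roots hp0).2 ((mul_eq_zero.1 hroot).resolve_right (pow_ne_zero _ (hs i hi)))
  · intro i hi j hj hij
    refine hinj hi hj (Projectivization.mk_eq_mk_of_mul_eq_mul _ _ ?_)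
    rw [div_eq_div_iff (hs i hi) (hs j hj)] at hij
    linear_combination hij

theorem MvPolynomial.IsHomogeneous.card_le_of_eval_eq_zero {K ι : Type*} [Field K] [Fintype ι]
    {G : MvPolynomial (Fin 2) K} {n : ℕ} (hG : G.IsHomogeneous n) (hG0 : G ≠ 0)
    {v : ι → Fin 2 → K} (hv : ∀ i, v i ≠ 0)
    (hinj : Function.Injective fun i => Projectivization.mk K (v i) (hv i))
    (hzero : ∀ i, eval (v i) G = 0) :
    Fintype.card ι ≤ n := by
  classical
  set p := MvPolynomial.aeval ![(Polynomial.X : Polynomial K), 1] G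
  have hpn : p.natDegree ≤ n := hG.natDegree_aeval_X_one_le_s14
  have hGp : p.homogenize n = G := Polynomial.homogenize_eq_of_isHomogeneous hG rfl
  have hp0 : p ≠ 0 := fun h => hG0 (by rw [← hGp, h, Polynomial.homogenize_zero])
  have hfinite : (Finset.univ.filter fun i => v i 1 ≠ 0).card ≤ p.natDegree :=
    Polynomial.card_le_natDegree_of_eval_homogenize_eq_zero hp0 hpn hv hinj.injOn
      (fun i hi => (Finset.mem_filter.1 hi).2) (fun i _ => hGp ▸ hzero i)
  set B := Finset.univ.filter fun i => ¬ v i 1 ≠ 0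
  have hB : ∀ i ∈ B, v i 1 = 0 := fun i hi => not_not.1 (Finset.mem_filter.1 hi).2
  have hB1 : B.card ≤ 1 := Finset.card_le_one.2 fun i hi j hj =>
    hinj (Projectivization.mk_eq_mk_of_mul_eq_mul _ _ (by rw [hB i hi, hB j hj]; ring))
  -- a zero at `[1 : 0]` means that `p` has lost its top coefficient
  have hBdeg : B.Nonempty → p.natDegree < n := by
    rintro ⟨i, hi⟩
    have hi0 : v i 0 ≠ 0 := fun hi0 =>
      hv i (_root_.funext (Fin.forall_fin_two.2 ⟨hi0, hB i hi⟩))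
    have hroot := hzero i
    rw [← hGp, Polynomial.eval_homogenize_of_eq_zero p n (hB i hi)] at hroot
    have hcoeff : p.coeff n = 0 := (mul_eq_zero.1 hroot).resolve_right (pow_ne_zero _ hi0)
    refine lt_of_le_of_ne hpn fun h => hp0 ?_
    rwa [← Polynomial.leadingCoeff_eq_zero, Polynomial.leadingCoeff, h]
  have hsplit : (Finset.univ.filter fun i => v i 1 ≠ 0).card + B.card = Fintype.card ι :=
    Finset.card_filter_add_card_filter_not _
  rcases B.eq_empty_or_nonempty with hB0 | hB0
  · rw [hB0, Finset.card_empty] at hsplit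
    omega
  · have := hBdeg hB0
    omega

/-- No rational quartic curve in `ℙ²` parametrized by real binary quartic forms
passes through ten distinct points of the empty conic `{x² + y² + z² = 0}`. -/
theorem no_real_quartic_through_ten_points_of_empty_conic
    (p : Fin 10 → Projectivization ℂ (Fin 3 → ℂ))
    (hpdist : Function.Injective p)
    (hpC : ∀ k, ∑ i, ((p k).rep i) ^ 2 = 0) :
    ¬ ∃ f : Fin 3 → MvPolynomial (Fin 2) ℝ,
      (∀ i, (f i).IsHomogeneous 4) ∧ (∃ i, f i ≠ 0) ∧
      ∀ k, ∃ (a b : ℂ) (h : (fun i => eval ![a, b] (map (algebraMap ℝ ℂ) (f i))) ≠ 0),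
        p k = Projectivization.mk ℂ _ h := by
  rintro ⟨f, hf, ⟨i₀, hi₀⟩, himg⟩
  choose a b hFab hpk using himg
  set F : Fin 3 → MvPolynomial (Fin 2) ℂ := fun i => map (algebraMap ℝ ℂ) (f i)
  have hF : ∀ i, (F i).IsHomogeneous 4 := fun i => (hf i).map _
  set v : Fin 10 → Fin 2 → ℂ := fun k => ![a k, b k]
  have hv : ∀ k, v k ≠ 0 := fun k h0 =>
    hFab k (funext fun i => by simp only [v] at h0; rw [h0, (hF i).eval_zero four_ne_zero]; rfl)
  have hinj : Function.Injective fun k => Projectivization.mk ℂ (v k) (hv k) := fun j k h =>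
    hpdist (by rw [hpk j, hpk k]; exact Projectivization.mk_eval_eq_mk_eval hF h _ _)
  have hG : (∑ i, F i ^ 2).IsHomogeneous 8 :=
    IsHomogeneous.sum _ _ _ fun i _ => (hF i).pow 2
  have hG0 : ∑ i, F i ^ 2 ≠ 0 := by
    simp only [F, ← map_pow, ← map_sum]
    exact (map_ne_zero_iff _ (map_injective _ (algebraMap ℝ ℂ).injective)).2
      (sum_sq_ne_zero hi₀)
  have hzero : ∀ k, eval (v k) (∑ i, F i ^ 2) = 0 := fun k => by
    simpa only [map_sum, map_pow] using
      Projectivization.sum_sq_eq_zero_of_eq_mk (hFab k) (hpk k) (hpC k)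
  simpa using hG.card_le_of_eval_eq_zero hG0 hv hinj hzero
end
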